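/- arXiv:2003.11049 — 2 statements merged into one kernel-verified Lean document; each statement's English description precedes it below -/
import Mathlib

section
/- If P is a symmetric positive definite symplectic matrix, then every real power P^t (defined via the spectral theorem, for t ∈ ℝ) is symplectic; in particular P^{1/2} is symplectic. -/
open Matrix

/-- The standard symplectic matrix in the ordering `(x₁,p₁,...,xₙ,pₙ)`:
`J = ⊕ₖ [[0,1],[-1,0]]`. -/
def StdJ (n : ℕ) : Matrix (Fin (2*n)) (Fin (2*n)) ℝ :=
  Matrix.of fun i j =>
    if i.val % 2 = 0 ∧ j.val = i.val + 1 then 1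
    else if i.val % 2 = 1 ∧ i.val = j.val + 1 then -1 else 0

/-- A real `2n×2n` matrix is symplectic if `Sᵀ J S = J`. -/
def IsSymplectic {n : ℕ} (S : Matrix (Fin (2*n)) (Fin (2*n)) ℝ) : Prop :=
  Sᵀ * StdJ n * S = StdJ n

lemma matrix_star_eq {m : Type*} (Y : Matrix m m ℝ) : star Y = Yᵀ := by
  rw [Matrix.star_eq_conjTranspose, conjTranspose_eq_transpose_of_trivial]

lemma StdJ_transpose (n : ℕ) : (StdJ n)ᵀ = -(StdJ n) := by
  ext i j
  simp only [transpose_apply, StdJ, of_apply, Matrix.neg_apply]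
  split_ifs <;> first | rfl | (exfalso; omega) | norm_num

lemma StdJ_sq (n : ℕ) : StdJ n * StdJ n = -1 := by
  ext i j
  rw [Matrix.mul_apply]
  by_cases hi : i.val % 2 = 0
  · have hlt : i.val + 1 < 2*n := by have := i.isLt; omega
    rw [Finset.sum_eq_single (⟨i.val + 1, hlt⟩ : Fin (2*n))]
    · simp only [StdJ, of_apply, Matrix.neg_apply, Matrix.one_apply, Fin.ext_iff, and_true, true_and]
      split_ifs <;> first | rfl | (exfalso; omega) | norm_num
    · intro k _ hk
      have : StdJ n i k = 0 := by
        simp only [StdJ, of_apply]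
        split_ifs with h1 h2
        · exact absurd (Fin.ext h1.2 : k = ⟨i.val+1, hlt⟩) hk
        · omega
        · rfl
      rw [this, zero_mul]
    · intro h; exact absurd (Finset.mem_univ _) h
  · have hi' : i.val % 2 = 1 := by omega
    have hlt : i.val - 1 < 2*n := by have := i.isLt; omega
    rw [Finset.sum_eq_single (⟨i.val - 1, hlt⟩ : Fin (2*n))]
    · simp only [StdJ, of_apply, Matrix.neg_apply, Matrix.one_apply, Fin.ext_iff, and_true, true_and]
      split_ifs <;> first | rfl | (exfalso; omega) | norm_num
    · intro k _ hk
      have : StdJ n i k = 0 := by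
        simp only [StdJ, of_apply]
        split_ifs with h1 h2
        · omega
        · exact absurd (Fin.ext (show k.val = i.val - 1 by omega) :
            k = ⟨i.val-1, hlt⟩) hk
        · rfl
      rw [this, zero_mul]
    · intro h; exact absurd (Finset.mem_univ _) h

lemma StdJ_mul_transpose (n : ℕ) : StdJ n * (StdJ n)ᵀ = 1 := by
  rw [StdJ_transpose, mul_neg, StdJ_sq, neg_neg]

lemma StdJ_transpose_mul (n : ℕ) : (StdJ n)ᵀ * StdJ n = 1 := by
  rw [StdJ_transpose, neg_mul, StdJ_sq, neg_neg]

/-- Conjugation by the (orthogonal) matrix `J` as a star algebra homomorphism. -/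
def conjStdJ (n : ℕ) :
    Matrix (Fin (2*n)) (Fin (2*n)) ℝ →⋆ₐ[ℝ] Matrix (Fin (2*n)) (Fin (2*n)) ℝ where
  toFun X := StdJ n * X * (StdJ n)ᵀ
  map_one' := by
    show StdJ n * 1 * (StdJ n)ᵀ = 1
    rw [mul_one, StdJ_mul_transpose]
  map_mul' X Y := by
    show StdJ n * (X * Y) * (StdJ n)ᵀ
      = (StdJ n * X * (StdJ n)ᵀ) * (StdJ n * Y * (StdJ n)ᵀ)
    rw [show (StdJ n * X * (StdJ n)ᵀ) * (StdJ n * Y * (StdJ n)ᵀ)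
        = StdJ n * X * ((StdJ n)ᵀ * StdJ n) * (Y * (StdJ n)ᵀ) from by
      simp only [mul_assoc], StdJ_transpose_mul, mul_one]
    simp only [mul_assoc]
  map_zero' := by
    show StdJ n * 0 * (StdJ n)ᵀ = 0
    rw [mul_zero, zero_mul]
  map_add' X Y := by
    show StdJ n * (X + Y) * (StdJ n)ᵀ
      = StdJ n * X * (StdJ n)ᵀ + StdJ n * Y * (StdJ n)ᵀ
    rw [mul_add, add_mul]
  commutes' r := by
    show StdJ n * algebraMap ℝ _ r * (StdJ n)ᵀ = algebraMap ℝ _ r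
    simp only [Algebra.algebraMap_eq_smul_one, Matrix.mul_smul, Matrix.smul_mul, mul_one,
      StdJ_mul_transpose]
  map_star' X := by
    show StdJ n * star X * (StdJ n)ᵀ = star (StdJ n * X * (StdJ n)ᵀ)
    rw [matrix_star_eq, matrix_star_eq, transpose_mul, transpose_mul, transpose_transpose,
      mul_assoc]

lemma conjStdJ_continuous (n : ℕ) : Continuous (conjStdJ n) := by
  show Continuous fun X : Matrix (Fin (2*n)) (Fin (2*n)) ℝ => StdJ n * X * (StdJ n)ᵀ
  exact (continuous_const.matrix_mul continuous_id).matrix_mul continuous_const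

/-- Real powers `P^t` (via the spectral theorem / functional calculus on
eigenvalues) of a symmetric positive definite symplectic matrix are symplectic. -/
theorem rpow_symplectic {n : ℕ} (P : Matrix (Fin (2*n)) (Fin (2*n)) ℝ)
    (hP : P.IsHermitian) (hPpos : P.PosDef) (hPsymp : IsSymplectic P) (t : ℝ) :
    IsSymplectic (hP.cfc fun x : ℝ => x ^ t) := by
  have hsa : IsSelfAdjoint P := hP
  have hPT : Pᵀ = P := by rw [← matrix_star_eq]; exact hsa
  -- positivity of the spectrum
  have hsp : ∀ x ∈ spectrum ℝ P, 0 < x := by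
    rw [hP.spectrum_real_eq_range_eigenvalues]
    rintro x ⟨i, rfl⟩
    exact hPpos.eigenvalues_pos i
  have hf : ContinuousOn (fun x : ℝ => x ^ t) (spectrum ℝ P) := fun x hx =>
    (Real.continuousAt_rpow_const x t (Or.inl (hsp x hx).ne')).continuousWithinAt
  have hinv : ContinuousOn (fun x : ℝ => x⁻¹) (spectrum ℝ P) := fun x hx =>
    (continuousAt_inv₀ (hsp x hx).ne').continuousWithinAt
  have hcont1 : ContinuousOn (fun x : ℝ => (x⁻¹) ^ t) (spectrum ℝ P) := fun x hx =>
    ((Real.continuousAt_rpow_const x⁻¹ t (Or.inl (inv_pos.mpr (hsp x hx)).ne')).comp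
      (continuousAt_inv₀ (hsp x hx).ne')).continuousWithinAt
  have himage : ContinuousOn (fun x : ℝ => x ^ t) ((fun x : ℝ => x⁻¹) '' spectrum ℝ P) := by
    rintro - ⟨x, hx, rfl⟩
    exact (Real.continuousAt_rpow_const _ t
      (Or.inl (inv_pos.mpr (hsp x hx)).ne')).continuousWithinAt
  -- rewrite to the generic cfc
  rw [← hP.cfc_eq]
  set J : Matrix (Fin (2*n)) (Fin (2*n)) ℝ := StdJ n with hJdef
  have hJT : Jᵀ = -J := StdJ_transpose n
  have hJTJ : Jᵀ * J = 1 := StdJ_transpose_mul n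
  have hJJT : J * Jᵀ = 1 := StdJ_mul_transpose n
  -- P J P = J
  have hPJP : P * J * P = J := by
    calc P * J * P = Pᵀ * J * P := by rw [hPT]
    _ = J := hPsymp
  -- the conjugate of P is its inverse
  set R : Matrix (Fin (2*n)) (Fin (2*n)) ℝ := conjStdJ n P with hRdef
  have hRval : R = J * P * Jᵀ := rfl
  have hPR : P * R = 1 := by
    rw [hRval]
    calc P * (J * P * Jᵀ) = (P * J * P) * Jᵀ := by simp only [mul_assoc]
    _ = J * Jᵀ := by rw [hPJP]
    _ = 1 := hJJT
  have hRP : R * P = 1 := mul_eq_one_comm.mp hPR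
  -- inverse via functional calculus
  have h1 : cfc (fun x : ℝ => x⁻¹ * x) P
      = cfc (fun x : ℝ => x⁻¹) P * cfc (fun x : ℝ => x) P :=
    cfc_mul _ _ P hinv (continuousOn_id' _)
  rw [cfc_id' ℝ P hsa] at h1
  have h2 : cfc (fun x : ℝ => x⁻¹ * x) P = 1 := by
    rw [cfc_congr (g := fun _ => (1:ℝ)) fun x hx => inv_mul_cancel₀ (hsp x hx).ne']
    exact cfc_const_one ℝ P
  have hinvP : cfc (fun x : ℝ => x⁻¹) P * P = 1 := by rw [← h1]; exact h2
  have hPinv : P * cfc (fun x : ℝ => x⁻¹) P = 1 := mul_eq_one_comm.mp hinvP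
  have hReq : R = cfc (fun x : ℝ => x⁻¹) P := by
    calc R = R * (P * cfc (fun x : ℝ => x⁻¹) P) := by rw [hPinv, mul_one]
    _ = (R * P) * cfc (fun x : ℝ => x⁻¹) P := by rw [mul_assoc]
    _ = cfc (fun x : ℝ => x⁻¹) P := by rw [hRP, one_mul]
  -- map_cfc
  have hRsa : IsSelfAdjoint R := hsa.map (conjStdJ n)
  have hmap : conjStdJ n (cfc (fun x : ℝ => x ^ t) P)
      = cfc (fun x : ℝ => x ^ t) R :=
    StarAlgHom.map_cfc (conjStdJ n) _ P hf (conjStdJ_continuous n) hsa hRsa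
  -- compose
  have hcomp : cfc (fun x : ℝ => x ^ t) R
      = cfc (fun x : ℝ => (x⁻¹) ^ t) P := by
    rw [hReq, ← cfc_comp (fun x : ℝ => x ^ t) (fun x : ℝ => x⁻¹) P hsa himage hinv]
    rfl
  set Q := cfc (fun x : ℝ => x ^ t) P with hQdef
  have hQsa : IsSelfAdjoint Q := cfc_predicate _ P
  have hQT : Qᵀ = Q := by rw [← matrix_star_eq]; exact hQsa
  -- the key cancellation
  have h3 : cfc (fun x : ℝ => (x⁻¹) ^ t * x ^ t) P
      = cfc (fun x : ℝ => (x⁻¹) ^ t) P * Q := cfc_mul _ _ P hcont1 hf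
  have h4 : cfc (fun x : ℝ => (x⁻¹) ^ t * x ^ t) P = 1 := by
    rw [cfc_congr (g := fun _ => (1:ℝ)) fun x hx => by
      rw [Real.inv_rpow (hsp x hx).le,
        inv_mul_cancel₀ (Real.rpow_pos_of_pos (hsp x hx) t).ne']]
    exact cfc_const_one ℝ P
  have hcancel : cfc (fun x : ℝ => (x⁻¹) ^ t) P * Q = 1 := by rw [← h3]; exact h4
  -- conclude
  have hconjQ : conjStdJ n Q = J * Q * Jᵀ := rfl
  have hJQJQ : J * Q * Jᵀ * Q = 1 := by
    rw [← hconjQ, hmap, hcomp]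
    exact hcancel
  have hQJQ : Q * Jᵀ * Q = Jᵀ := by
    calc Q * Jᵀ * Q = Jᵀ * J * Q * Jᵀ * Q := by rw [hJTJ, one_mul]
    _ = Jᵀ * (J * Q * Jᵀ * Q) := by simp only [mul_assoc]
    _ = Jᵀ := by rw [hJQJQ, mul_one]
  show Qᵀ * J * Q = J
  rw [hQT]
  rw [hJT] at hQJQ
  have h5 : -(Q * J * Q) = -J := by rw [← neg_mul, ← mul_neg]; exact hQJQ
  exact neg_injective h5
end

section
/- Suppose the covariance matrix Σ (real symmetric positive definite 2n×2n, n = n_A + n_B) satisfies: there exists a symplectic rotation U ∈ Sp(2n,ℝ) ∩ O(2n,ℝ) and positive reals λ₁,...,λₙ such that (ħ/2)Δ² ≤ UΣUᵀ, where Δ = Δ_A ⊕ Δ_B with Δ_A = ⊕_{k≤n_A} diag(λₖ,λₖ⁻¹), Δ_B = ⊕_{k>n_A} diag(λₖ,λₖ⁻¹). Then the matrices Σ_A = (ħ/2)Δ_A², Σ_B = (ħ/2)Δ_B² satisfy the Werner–Wolf separability conditions: Σ_A + (iħ/2)J_A ≥ 0, Σ_B + (iħ/2)J_B ≥ 0,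 and Σ_A ⊕ Σ_B ≤ UΣUᵀ. -/
set_option maxHeartbeats 2000000


open Matrix
open scoped ComplexOrder

/-- The complex Hermitian matrix `Σ + (iħ/2) J`. -/
noncomputable def quantMat {n : ℕ} (hbar : ℝ) (Sig : Matrix (Fin (2*n)) (Fin (2*n)) ℝ) :
    Matrix (Fin (2*n)) (Fin (2*n)) ℂ :=
  Sig.map (Complex.ofReal) + ((hbar/2 : ℝ) : ℂ) • Complex.I • (StdJ n).map (Complex.ofReal)
/-- The diagonal matrix `⊕ₖ diag(λₖ, λₖ⁻¹)` in the ordering `(x₁,p₁,...,xₙ,pₙ)`. -/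
noncomputable def pairDiag {m : ℕ} (lam : Fin m → ℝ) : Matrix (Fin (2*m)) (Fin (2*m)) ℝ :=
  Matrix.diagonal fun i =>
    if i.val % 2 = 0 then lam ⟨i.val / 2, by have := i.isLt; omega⟩
    else (lam ⟨i.val / 2, by have := i.isLt; omega⟩)⁻¹
/-- Direct sum `A ⊕ B` of matrices for the bipartition `2(n_A+n_B) = 2n_A + 2n_B`. -/
def dsum {a b : ℕ} (A : Matrix (Fin (2*a)) (Fin (2*a)) ℝ) (B : Matrix (Fin (2*b)) (Fin (2*b)) ℝ) :
    Matrix (Fin (2*(a+b))) (Fin (2*(a+b))) ℝ :=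
  Matrix.reindex (finSumFinEquiv.trans (finCongr (by ring))) (finSumFinEquiv.trans (finCongr (by ring)))
    (Matrix.fromBlocks A 0 0 B)

noncomputable def auxC (hbar : ℝ) {m : ℕ} (μ : Fin m → ℝ) : Matrix (Fin (2*m)) (Fin (2*m)) ℂ :=
  Matrix.of fun k j =>
    if k.val % 2 = 0 then
      if j.val = k.val then ((Real.sqrt (hbar/2) * μ ⟨k.val/2, by have := k.isLt; omega⟩ : ℝ) : ℂ)
      else if j.val = k.val + 1 then
        ((Real.sqrt (hbar/2) : ℝ) : ℂ) * Complex.I / ((μ ⟨k.val/2, by have := k.isLt; omega⟩ : ℝ) : ℂ)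
      else 0
    else 0

lemma quant_factor (hbar : ℝ) (hh : 0 ≤ hbar) {m : ℕ} (μ : Fin m → ℝ) (hμ : ∀ k, 0 < μ k) :
    quantMat hbar ((hbar/2) • (pairDiag μ)^2) = (auxC hbar μ)ᴴ * (auxC hbar μ) := by
  have hs : (Real.sqrt (hbar/2)) * (Real.sqrt (hbar/2)) = hbar/2 :=
    Real.mul_self_sqrt (by linarith)
  ext i j
  set k0 : Fin (2*m) := ⟨2*(i.val/2), by have := i.isLt; omega⟩ with hk0
  have hμne : ∀ k : Fin m, ((μ k : ℝ) : ℂ) ≠ 0 := fun k =>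
    Complex.ofReal_ne_zero.mpr (hμ k).ne'
  have hc' : (Complex.ofReal hbar)/2
      = ((Real.sqrt (hbar/2) : ℝ) : ℂ) * ((Real.sqrt (hbar/2) : ℝ) : ℂ) := by
    rw [← Complex.ofReal_mul, hs]; push_cast; ring
  rw [Matrix.mul_apply, Finset.sum_eq_single k0]
  · -- main term
    rw [Matrix.conjTranspose_apply]
    have hLHS : quantMat hbar ((hbar/2) • (pairDiag μ)^2) i j
        = (((hbar/2) * (if i = j then
            ((if i.val % 2 = 0 then μ ⟨i.val / 2, by have := i.isLt; omega⟩
              else (μ ⟨i.val / 2, by have := i.isLt; omega⟩)⁻¹) ^ 2) else 0) : ℝ) : ℂ)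
          + ((hbar/2 : ℝ) : ℂ) * Complex.I *
            (((if i.val % 2 = 0 ∧ j.val = i.val + 1 then (1:ℝ)
               else if i.val % 2 = 1 ∧ i.val = j.val + 1 then -1 else 0) : ℝ) : ℂ) := by
      simp only [quantMat, Matrix.add_apply, Matrix.map_apply, Matrix.smul_apply,
        smul_eq_mul, pairDiag, pow_two, Matrix.diagonal_mul_diagonal, Matrix.diagonal_apply,
        StdJ, Matrix.of_apply, Complex.real_smul]
      split_ifs <;> (try push_cast) <;> ring
    rw [hLHS]
    have hk0v : (k0 : ℕ) = 2*(i.val/2) := rfl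
    have hre : (⟨(2*(i.val/2))/2, by have := i.isLt; omega⟩ : Fin m)
        = ⟨i.val/2, by have := i.isLt; omega⟩ :=
      Fin.ext (show (2*(i.val/2))/2 = i.val/2 by omega)
    have hμ' := hμne ⟨i.val/2, by have := i.isLt; omega⟩
    simp only [auxC, Matrix.of_apply, hk0v, hre, Fin.ext_iff]
    rw [Complex.star_def]
    split_ifs <;>
      first
        | (exfalso; omega)
        | (simp only [map_div₀, _root_.map_mul, _root_.map_zero, _root_.map_one,
            Complex.conj_ofReal, Complex.conj_I, star_zero]
           push_cast
           try rw [hc']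
           try generalize ((Real.sqrt (hbar/2) : ℝ) : ℂ) = X
           try field_simp
           try ring_nf
           try simp only [Complex.I_sq]
           try ring_nf
           try norm_num)
  · intro k _ hk
    have hCzero : auxC hbar μ k i = 0 := by
      simp only [auxC, Matrix.of_apply]
      split_ifs with h1 h2 h3
      · exfalso; apply hk; apply Fin.ext
        show k.val = 2*(i.val/2); omega
      · exfalso; apply hk; apply Fin.ext
        show k.val = 2*(i.val/2); omega
      · rfl
      · rfl
    rw [Matrix.conjTranspose_apply, hCzero, star_zero, zero_mul]
  · intro h; exact absurd (Finset.mem_univ k0) h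

lemma dsum_eq {nA nB : ℕ} (c : ℝ) (lam : Fin (nA+nB) → ℝ) :
    dsum (c • (pairDiag fun k : Fin nA => lam (Fin.castAdd nB k))^2)
         (c • (pairDiag fun k : Fin nB => lam (Fin.natAdd nA k))^2)
      = c • (pairDiag lam)^2 := by
  unfold dsum
  rw [Matrix.reindex_apply]
  ext i j
  rw [Matrix.submatrix_apply]
  set e : Fin (2*nA) ⊕ Fin (2*nB) ≃ Fin (2*(nA+nB)) :=
    (finSumFinEquiv.trans (finCongr (by ring)))
  have hval : ∀ s : Fin (2*nA) ⊕ Fin (2*nB),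
      (e s).val = Sum.elim (fun x : Fin (2*nA) => (x:ℕ)) (fun x : Fin (2*nB) => 2*nA + x) s := by
    rintro (x|x) <;> simp [e, finSumFinEquiv]
  have hiv : (e (e.symm i)).val = i.val := by rw [e.apply_symm_apply]
  have hjv : (e (e.symm j)).val = j.val := by rw [e.apply_symm_apply]
  simp only [pairDiag, pow_two, Matrix.smul_apply, Matrix.diagonal_mul_diagonal,
    Matrix.diagonal_apply, smul_eq_mul]
  rcases hsi : e.symm i with x | x <;> rcases hsj : e.symm j with y | y <;>
    rw [hsi] at hiv <;> rw [hsj] at hjv <;> rw [hval] at hiv hjv <;>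
    simp only [Sum.elim_inl, Sum.elim_inr] at hiv hjv
  · rw [Matrix.fromBlocks_apply₁₁]
    simp only [pairDiag, pow_two, Matrix.smul_apply, Matrix.diagonal_mul_diagonal,
      Matrix.diagonal_apply, smul_eq_mul]
    by_cases hxy : x = y
    · subst hxy
      have hidx : (Fin.castAdd nB ⟨x.val/2, by have := x.isLt; omega⟩ : Fin (nA+nB))
          = ⟨i.val/2, by have := i.isLt; omega⟩ := Fin.ext (by simp; omega)
      have hpar : x.val % 2 = i.val % 2 := by omega
      rw [if_pos rfl, if_pos (Fin.ext (by omega) : i = j)]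
      try rw [hidx]
      try rw [hpar]
    · rw [if_neg hxy, if_neg (fun h : i = j => hxy (by
        apply Fin.ext
        have := congrArg Fin.val h; omega))]
      try ring
  · rw [Matrix.fromBlocks_apply₁₂]
    have : ¬ i = j := fun h => by have := congrArg Fin.val h; have := x.isLt; omega
    rw [if_neg this]
    simp
  · rw [Matrix.fromBlocks_apply₂₁]
    have : ¬ i = j := fun h => by have := congrArg Fin.val h; have := y.isLt; omega
    rw [if_neg this]
    simp
  · rw [Matrix.fromBlocks_apply₂₂]
    simp only [pairDiag, pow_two, Matrix.smul_apply, Matrix.diagonal_mul_diagonal,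
      Matrix.diagonal_apply, smul_eq_mul]
    by_cases hxy : x = y
    · subst hxy
      have hidx : (Fin.natAdd nA ⟨x.val/2, by have := x.isLt; omega⟩ : Fin (nA+nB))
          = ⟨i.val/2, by have := i.isLt; omega⟩ := Fin.ext (by simp; omega)
      have hpar : x.val % 2 = i.val % 2 := by omega
      rw [if_pos rfl, if_pos (Fin.ext (by omega) : i = j)]
      try rw [hidx]
      try rw [hpar]
    · rw [if_neg hxy, if_neg (fun h : i = j => hxy (by
        apply Fin.ext
        have := congrArg Fin.val h; omega))]
      try ring

/-- If `(ħ/2)Δ² ≤ UΣUᵀ` for a symplectic rotation `U` and `Δ = Δ_A ⊕ Δ_B`, then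
`Σ_A = (ħ/2)Δ_A²`, `Σ_B = (ħ/2)Δ_B²` satisfy the Werner–Wolf separability conditions. -/
theorem werner_wolf_conditions_from_diag {nA nB : ℕ} (hbar : ℝ) (hh : 0 < hbar)
    (Sig : Matrix (Fin (2*(nA+nB))) (Fin (2*(nA+nB))) ℝ) (hsymm : Sig.IsSymm) (hpos : Sig.PosDef)
    (U : Matrix (Fin (2*(nA+nB))) (Fin (2*(nA+nB))) ℝ)
    (hUsymp : IsSymplectic U) (hUorth : Uᵀ * U = 1)
    (lam : Fin (nA+nB) → ℝ) (hlam : ∀ k, 0 < lam k)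
    (hineq : (U * Sig * Uᵀ - (hbar/2) • (pairDiag lam)^2).PosSemidef) :
    (quantMat hbar ((hbar/2) • (pairDiag fun k : Fin nA => lam (Fin.castAdd nB k))^2)).PosSemidef ∧
    (quantMat hbar ((hbar/2) • (pairDiag fun k : Fin nB => lam (Fin.natAdd nA k))^2)).PosSemidef ∧
    (U * Sig * Uᵀ -
      dsum ((hbar/2) • (pairDiag fun k : Fin nA => lam (Fin.castAdd nB k))^2)
           ((hbar/2) • (pairDiag fun k : Fin nB => lam (Fin.natAdd nA k))^2)).PosSemidef := by
  refine ⟨?_, ?_, ?_⟩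
  · rw [quant_factor hbar hh.le _ (fun k => hlam _)]
    exact Matrix.posSemidef_conjTranspose_mul_self _
  · rw [quant_factor hbar hh.le _ (fun k => hlam _)]
    exact Matrix.posSemidef_conjTranspose_mul_self _
  · rw [dsum_eq]
    exact hineq
end
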